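/- arXiv:1007.4584 — 6 statements merged into one kernel-verified Lean document; each statement's English description precedes it below -/
import Mathlib

section
/- For integers n > 2 and n-1 ≤ k ≤ 2n-3 with n even and k odd, writing n' = n/2 and k' = (k+1)/2, the evaluation of the q-analogue c(n,k;q) = (1/[n-1]_q) * qbinom(3n-3, n+k) * qbinom(k-1, n-2) at q = -1 equals binom(3n'-2, n'+k'-1) * binom(k'-1, n'-1). -/
/-- The Gaussian binomial coefficient as a polynomial in `q` over `ℤ`, via the
`q`-Pascal recursion `[n+1, k+1]_q = [n, k]_q + q^(k+1)·[n, k+1]_q`. -/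
noncomputable def gauss : ℕ → ℕ → Polynomial ℤ
  | _, 0 => 1
  | 0, _ + 1 => 0
  | n + 1, k + 1 => gauss n k + Polynomial.X ^ (k + 1) * gauss n (k + 1)

lemma gauss_eval : ∀ m r, Polynomial.eval (-1:ℤ) (gauss m r) =
    if Even m ∧ Odd r then 0 else ((m/2).choose (r/2) : ℤ)
  | _, 0 => by simp [gauss, Nat.odd_iff]
  | 0, r+1 => by
    simp only [gauss, Polynomial.eval_zero]
    split
    · rfl
    · rename_i h
      have h2 : ¬ Odd (r+1) := fun ho => h ⟨Even.zero, ho⟩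
      have : (r+1)/2 ≠ 0 := by rw [Nat.not_odd_iff_even, Nat.even_iff] at h2; omega
      rw [Nat.choose_eq_zero_of_lt (by omega), Int.natCast_zero]
  | n+1, k+1 => by
    have h1 := gauss_eval n k
    have h2 := gauss_eval n (k+1)
    simp only [gauss, Polynomial.eval_add, Polynomial.eval_mul, Polynomial.eval_pow,
      Polynomial.eval_X, h1, h2]
    rcases Nat.even_or_odd n with hn | hn <;> rcases Nat.even_or_odd k with hk | hk
    · obtain ⟨a, rfl⟩ := hn; obtain ⟨b, rfl⟩ := hk
      have e1 : ¬ Even (a+a+1) := by rw [Nat.even_iff]; omega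
      have e2 : Odd (b+b+1) := by rw [Nat.odd_iff]; omega
      have d1 : (a+a)/2 = a := by omega
      have d2 : (a+a+1)/2 = a := by omega
      have d3 : (b+b)/2 = b := by omega
      have d4 : (b+b+1)/2 = b := by omega
      simp [e1, e2, Nat.even_iff, Nat.odd_iff, pow_succ, Even.neg_one_pow ⟨b,rfl⟩,
        d1, d2, d3, d4, Nat.mul_mod_right, (by omega : (b+b)%2 = 0)]
    · obtain ⟨a, rfl⟩ := hn; obtain ⟨b, rfl⟩ := hk
      have e1 : ¬ Even (a+a+1) := by rw [Nat.even_iff]; omega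
      have e2 : ¬ Odd (2*b+1+1) := by rw [Nat.odd_iff]; omega
      have e3 : Odd (2*b+1) := ⟨b, rfl⟩
      have d1 : (a+a)/2 = a := by omega
      have d2 : (a+a+1)/2 = a := by omega
      have d3 : (2*b+1+1)/2 = b+1 := by omega
      simp [e1, e2, e3, pow_succ, Odd.neg_one_pow ⟨b,rfl⟩, d1, d2, d3]
    · obtain ⟨a, rfl⟩ := hn; obtain ⟨b, rfl⟩ := hk
      have e1 : Even (2*a+1+1) := ⟨a+1, by ring⟩
      have e2 : Odd (b+b+1) := ⟨b, by ring⟩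
      have e3 : ¬ Even (2*a+1) := by rw [Nat.even_iff]; omega
      have d1 : (b+b+1)/2 = b := by omega
      have d2 : (b+b)/2 = b := by omega
      simp [e1, e2, e3, pow_succ, Even.neg_one_pow ⟨b,rfl⟩, d1, d2, Nat.odd_iff]
    · obtain ⟨a, rfl⟩ := hn; obtain ⟨b, rfl⟩ := hk
      have e2 : ¬ Odd (2*b+1+1) := by rw [Nat.odd_iff]; omega
      have e3 : ¬ Even (2*a+1) := by rw [Nat.even_iff]; omega
      have e4 : (2*a+1+1)/2 = a+1 := by omega
      have e5 : (2*b+1+1)/2 = b+1 := by omega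
      have e6 : (2*a+1)/2 = a := by omega
      have e7 : (2*b+1)/2 = b := by omega
      simp [e2, e3, pow_succ, Odd.neg_one_pow ⟨b,rfl⟩, e4, e5, e6, e7, Nat.odd_iff,
        Nat.choose_succ_succ]

lemma aeval_gauss (m r : ℕ) : Polynomial.aeval (-1 : ℂ) (gauss m r) =
    ((Polynomial.eval (-1 : ℤ) (gauss m r) : ℤ) : ℂ) := by
  rw [Polynomial.aeval_def, Polynomial.eval₂_eq_eval_map]
  rw [show ((-1 : ℂ)) = ((-1 : ℤ) : ℂ) by norm_num]
  rw [Polynomial.eval_intCast_map]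
  simp

/-- Evaluation of `c(n,k;q) = (1/[n-1]_q)·[3n-3, n+k]_q·[k-1, n-2]_q` at `q = -1`,
for `n > 2` even and `k` odd with `n-1 ≤ k ≤ 2n-3`, equals
`C(3n'-2, n'+k'-1)·C(k'-1, n'-1)` with `n' = n/2`, `k' = (k+1)/2`. -/
theorem stmt0 (n k : ℕ) (hn : 2 < n) (hnk : (n : ℤ) - 1 ≤ (k : ℤ))
    (hk : (k : ℤ) ≤ 2 * (n : ℤ) - 3) (hne : Even n) (hko : Odd k) :
    Polynomial.aeval (-1 : ℂ) (gauss (3 * n - 3) (n + k)) *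
        Polynomial.aeval (-1 : ℂ) (gauss (k - 1) (n - 2)) /
        (∑ i ∈ Finset.range (n - 1), (-1 : ℂ) ^ i) =
      (Nat.choose (3 * (n / 2) - 2) (n / 2 + (k + 1) / 2 - 1) *
        Nat.choose ((k + 1) / 2 - 1) (n / 2 - 1) : ℕ) := by
  have hne' := Nat.even_iff.mp hne
  have hko' := Nat.odd_iff.mp hko
  have hden : (∑ i ∈ Finset.range (n - 1), (-1 : ℂ) ^ i) = 1 := by
    rw [neg_one_geom_sum, if_neg]
    rw [Nat.even_iff]; omega
  have c1 : ¬ (Even (3*n-3) ∧ Odd (n+k)) := by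
    rintro ⟨h, -⟩; rw [Nat.even_iff] at h; omega
  have c2 : ¬ (Even (k-1) ∧ Odd (n-2)) := by
    rintro ⟨-, h⟩; rw [Nat.odd_iff] at h; omega
  rw [hden, div_one, aeval_gauss, aeval_gauss, gauss_eval, gauss_eval, if_neg c1, if_neg c2]
  have d1 : (3*n-3)/2 = 3*(n/2) - 2 := by omega
  have d2 : (n+k)/2 = n/2 + (k+1)/2 - 1 := by omega
  have d3 : (k-1)/2 = (k+1)/2 - 1 := by omega
  have d4 : (n-2)/2 = n/2 - 1 := by omega
  rw [d1, d2, d3, d4]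
  push_cast
  ring
end

section
/- Let d ≥ 3, let d divide n, let n-1 ≤ k ≤ 2n-3, and suppose d divides k. Then with n' = n/d and k' = k/d, the evaluation of c(n,k;q) = (1/[n-1]_q) * qbinom(3n-3, n+k) * qbinom(k-1, n-2) at a primitive d-th root of unity ω equals binom(3n'-1, n'+k') * binom(k'-1, n'-1). -/
open Polynomial Finset

lemma gauss_zero_right (m : ℕ) : gauss m 0 = 1 := by cases m <;> rfl

lemma gauss_succ_succ (m k : ℕ) :
    gauss (m + 1) (k + 1) = gauss m k + X ^ (k + 1) * gauss m (k + 1) := rfl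

lemma gauss_eq_zero_of_lt {m k : ℕ} (h : m < k) : gauss m k = 0 := by
  induction m generalizing k with
  | zero => obtain ⟨k, rfl⟩ := Nat.exists_eq_succ_of_ne_zero h.ne'; rfl
  | succ m ih =>
    obtain ⟨k, rfl⟩ := Nat.exists_eq_succ_of_ne_zero (by omega : k ≠ 0)
    rw [gauss_succ_succ, ih (by omega), ih (by omega), mul_zero, add_zero]

lemma gauss_self (m : ℕ) : gauss m m = 1 := by
  induction m with
  | zero => rfl
  | succ m ih => rw [gauss_succ_succ, ih, gauss_eq_zero_of_lt m.lt_succ_self, mul_zero, add_zero]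

lemma gauss_one_right (m : ℕ) : gauss m 1 = ∑ i ∈ range m, X ^ i := by
  induction m with
  | zero => rfl
  | succ m ih => rw [gauss_succ_succ, gauss_zero_right, ih, geom_sum_succ]; ring

lemma gauss_succ_self_right (m : ℕ) : gauss (m + 1) m = ∑ i ∈ range (m + 1), X ^ i := by
  induction m with
  | zero => rw [gauss_zero_right, sum_range_one, pow_zero]
  | succ m ih => rw [gauss_succ_succ, ih, gauss_self, sum_range_succ _ (m + 1), mul_one]

lemma gauss_succ_right_mul (m k : ℕ) :
    gauss m (k + 1) * (1 - X ^ (k + 1)) = gauss m k * (1 - X ^ (m - k)) := by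
  induction m generalizing k with
  | zero => cases k <;> simp [gauss_eq_zero_of_lt]
  | succ m ih =>
    cases k with
    | zero => rw [gauss_one_right, gauss_zero_right, one_mul, zero_add, pow_one,
        geom_sum_mul_neg, Nat.sub_zero]
    | succ j =>
      rcases Nat.lt_or_ge j m with hjm | hjm
      · have hpow : (X : ℤ[X]) ^ (j + 2) * X ^ (m - (j + 1)) = X ^ (j + 1) * X ^ (m - j) := by
          rw [← pow_add, ← pow_add]; congr 1; omega
        rw [gauss_succ_succ, gauss_succ_succ m j, Nat.add_sub_add_right]
        linear_combination X ^ (j + 2) * ih (j + 1) + ih j - gauss m (j + 1) * hpow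
      · rw [gauss_eq_zero_of_lt (by omega : m + 1 < j + 2), Nat.sub_eq_zero_of_le (by omega)]
        ring

namespace IsPrimitiveRoot

variable {R : Type*} [CommRing R] [IsDomain R] {ω : R} {d : ℕ}

lemma aeval_gauss_eq_zero (hω : IsPrimitiveRoot ω d) {t : ℕ} (ht : 0 < t)
    (htd : t < d) : aeval ω (gauss d t) = 0 := by
  have succ_eq_zero : ∀ s, s + 1 < d → aeval ω (gauss d s) * (1 - ω ^ (d - s)) = 0 →
      aeval ω (gauss d (s + 1)) = 0 := fun s hs h ↦ by
    have hpow : 1 - ω ^ (s + 1) ≠ 0 :=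
      sub_ne_zero.mpr (hω.pow_ne_one_of_pos_of_lt s.succ_ne_zero hs).symm
    have := congrArg (aeval ω) (gauss_succ_right_mul d s)
    simp only [map_mul, map_sub, map_one, map_pow, aeval_X] at this
    exact (mul_eq_zero.mp (this.trans h)).resolve_right hpow
  induction t, ht using Nat.le_induction with
  | base => exact succ_eq_zero 0 htd (by rw [Nat.sub_zero, hω.pow_eq_one, sub_self, mul_zero])
  | succ t _ ih => exact succ_eq_zero t htd (by rw [ih (by omega), zero_mul])

lemma aeval_gauss_add (hω : IsPrimitiveRoot ω d) (hd : 0 < d) (m k : ℕ) :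
    aeval ω (gauss (m + d) k) =
      aeval ω (gauss m k) + if d ≤ k then aeval ω (gauss m (k - d)) else 0 := by
  induction m generalizing k with
  | zero =>
    rcases Nat.eq_zero_or_pos k with rfl | hk
    · simp [gauss_zero_right, hd.ne']
    rw [zero_add, gauss_eq_zero_of_lt hk, map_zero, zero_add]
    rcases lt_trichotomy k d with h | rfl | h
    · rw [hω.aeval_gauss_eq_zero hk h, if_neg (by omega)]
    · rw [gauss_self, if_pos le_rfl, Nat.sub_self, gauss_zero_right]
    · rw [gauss_eq_zero_of_lt h, if_pos h.le, gauss_eq_zero_of_lt (by omega : 0 < k - d),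
        map_zero]
  | succ m ih =>
    cases k with
    | zero => simp [gauss_zero_right, hd.ne']
    | succ j =>
      rw [Nat.add_right_comm, gauss_succ_succ, gauss_succ_succ, map_add, map_add, map_mul,
        map_mul, map_pow, aeval_X, ih, ih]
      rcases lt_trichotomy (j + 1) d with h | rfl | h
      · rw [if_neg (by omega), if_neg (by omega), if_neg (by omega)]; ring
      · rw [if_neg (by omega), if_pos le_rfl, if_pos le_rfl, Nat.sub_self, hω.pow_eq_one]
        simp only [gauss_zero_right, map_one]
        ring
      · obtain ⟨i, rfl⟩ : ∃ i, j = i + d := ⟨j - d, by omega⟩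
        have hpow : ω ^ (i + d + 1) = ω ^ (i + 1) := by
          rw [Nat.add_right_comm, pow_add, hω.pow_eq_one, mul_one]
        rw [if_pos (by omega), if_pos (by omega), if_pos (by omega), Nat.add_sub_cancel,
          show i + d + 1 - d = i + 1 by omega, gauss_succ_succ, map_add, map_mul, map_pow,
          aeval_X, hpow]
        ring

/-- The `q`-Lucas theorem at a primitive `d`-th root of unity. -/
lemma aeval_gauss_mul_add (hω : IsPrimitiveRoot ω d) (a b : ℕ) {r s : ℕ}
    (hr : r < d) (hs : s < d) :
    aeval ω (gauss (a * d + r) (b * d + s)) = a.choose b * aeval ω (gauss r s) := by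
  induction a generalizing b with
  | zero =>
    rcases Nat.eq_zero_or_pos b with rfl | hb
    · simp
    · rw [gauss_eq_zero_of_lt (by nlinarith), Nat.choose_eq_zero_of_lt hb]
      simp
  | succ a ih =>
    rw [Nat.succ_mul, Nat.add_right_comm, hω.aeval_gauss_add (by omega)]
    cases b with
    | zero =>
      rw [if_neg (by omega), ih 0]
      simp
    | succ c =>
      rw [if_pos (by rw [Nat.succ_mul]; omega),
        show (c + 1) * d + s - d = c * d + s by rw [Nat.succ_mul]; omega,
        ih, ih, Nat.choose_succ_succ, Nat.cast_add]
      ring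

lemma geom_sum_pred_ne_zero (hω : IsPrimitiveRoot ω d) (hd : 1 < d) :
    ∑ i ∈ range (d - 1), ω ^ i ≠ 0 := by
  obtain ⟨e, rfl⟩ : ∃ e, d = e + 1 := ⟨d - 1, by omega⟩
  have h := hω.geom_sum_eq_zero hd
  rw [sum_range_succ, add_eq_zero_iff_eq_neg] at h
  rw [Nat.add_sub_cancel, h, neg_ne_zero]
  exact pow_ne_zero _ (hω.ne_zero (by omega))

end IsPrimitiveRoot

lemma Nat.mul_sub_eq_sub_one_mul_add_sub {d n j : ℕ} (hn : 1 ≤ n) (hj : j ≤ d) :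
    d * n - j = (n - 1) * d + (d - j) := by
  obtain ⟨m, rfl⟩ : ∃ m, n = m + 1 := ⟨n - 1, by omega⟩
  rw [Nat.add_sub_cancel, mul_add, mul_one, mul_comm]
  omega

/-- For `d ≥ 3` dividing both `n` and `k`, with `n-1 ≤ k ≤ 2n-3`, the evaluation of
`c(n,k;q) = (1/[n-1]_q)·[3n-3, n+k]_q·[k-1, n-2]_q` at a primitive `d`-th root of
unity `ω` equals `C(3n'-1, n'+k')·C(k'-1, n'-1)` with `n' = n/d`, `k' = k/d`. -/
theorem stmt2 (n k d : ℕ) (hd : 3 ≤ d) (hdn : d ∣ n) (hdk : d ∣ k)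
    (hnk : (n : ℤ) - 1 ≤ (k : ℤ)) (hk : (k : ℤ) ≤ 2 * (n : ℤ) - 3)
    (ω : ℂ) (hω : IsPrimitiveRoot ω d) :
    Polynomial.aeval ω (gauss (3 * n - 3) (n + k)) *
        Polynomial.aeval ω (gauss (k - 1) (n - 2)) /
        (∑ i ∈ Finset.range (n - 1), ω ^ i) =
      (Nat.choose (3 * (n / d) - 1) (n / d + k / d) *
        Nat.choose (k / d - 1) (n / d - 1) : ℕ) := by
  obtain ⟨n', rfl⟩ := hdn
  obtain ⟨k', rfl⟩ := hdk
  have hn' : 1 ≤ n' := by push_cast at hk; nlinarith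
  have hk' : 1 ≤ k' := by push_cast at hnk; nlinarith
  rw [Nat.mul_div_cancel_left _ (by omega), Nat.mul_div_cancel_left _ (by omega)]
  set S := ∑ i ∈ range (d - 1), ω ^ i
  have top : aeval ω (gauss (3 * (d * n') - 3) (d * n' + d * k')) =
      (3 * n' - 1).choose (n' + k') := by
    rw [mul_left_comm, Nat.mul_sub_eq_sub_one_mul_add_sub (by omega) hd,
      show d * n' + d * k' = (n' + k') * d + 0 by ring,
      hω.aeval_gauss_mul_add _ _ (by omega) (by omega), gauss_zero_right, map_one, mul_one]
  have bottom : aeval ω (gauss (d * k' - 1) (d * n' - 2)) =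
      (k' - 1).choose (n' - 1) * S := by
    rw [Nat.mul_sub_eq_sub_one_mul_add_sub hk' (by omega),
      Nat.mul_sub_eq_sub_one_mul_add_sub hn' (by omega),
      hω.aeval_gauss_mul_add _ _ (by omega) (by omega),
      show d - 1 = d - 2 + 1 by omega, gauss_succ_self_right, show d - 2 + 1 = d - 1 by omega]
    simp [S]
  have denom : ∑ i ∈ range (d * n' - 1), ω ^ i = S := by
    have := hω.aeval_gauss_mul_add (n' - 1) 0 (r := d - 1) (s := 1) (by omega) (by omega)
    rw [← Nat.mul_sub_eq_sub_one_mul_add_sub hn' (by omega), zero_mul, zero_add,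
      gauss_one_right, gauss_one_right, Nat.choose_zero_right] at this
    simpa [S] using this
  rw [top, bottom, denom, ← mul_assoc, mul_div_assoc,
    div_self (hω.geom_sum_pred_ne_zero (by omega)), mul_one]
  push_cast
  ring
end

section
/- For integers n ≥ 2 and n-1 ≤ k ≤ 2n-3, the binomial identity binom(3n-5, n+k-2)*binom(k-1, n-2) + binom(3n-5, n+k-1)*binom(k, n-2) = binom(3n-3, n+k)*binom(k-1, n-2) + ((2n-2)/(n-2))*binom(3n-5, n+k)*binom(k-1, n-3) holds (for n > 2; interpret the last term via (2n-2)*binom(3n-5,n+k)*binom(k-1,n-3) = (n-2)*[LHS - first RHS term] if dividing). -/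
open Nat

lemma gkey (j t : ℕ) :
    (j+t+2) * (Nat.choose (3*j+3*t+7) (3*j+2*t+5) * Nat.choose (2*j+t+2) (j+t+2)) +
    (j+t+2) * (Nat.choose (3*j+3*t+7) (3*j+2*t+6) * Nat.choose (2*j+t+3) (j+t+2)) =
    (j+t+2) * (Nat.choose (3*j+3*t+9) (3*j+2*t+7) * Nat.choose (2*j+t+2) (j+t+2)) +
    (2*j+2*t+6) * (Nat.choose (3*j+3*t+7) (3*j+2*t+7) * Nat.choose (2*j+t+2) (j+t+1)) := by
  have key : ((j+t+2) * (Nat.choose (3*j+3*t+7) (3*j+2*t+5) * Nat.choose (2*j+t+2) (j+t+2)) +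
      (j+t+2) * (Nat.choose (3*j+3*t+7) (3*j+2*t+6) * Nat.choose (2*j+t+3) (j+t+2)) : ℚ) =
      (j+t+2) * (Nat.choose (3*j+3*t+9) (3*j+2*t+7) * Nat.choose (2*j+t+2) (j+t+2)) +
      (2*j+2*t+6) * (Nat.choose (3*j+3*t+7) (3*j+2*t+7) * Nat.choose (2*j+t+2) (j+t+1)) := by
    rw [Nat.cast_choose ℚ (show 3*j+2*t+5 ≤ 3*j+3*t+7 by omega),
        Nat.cast_choose ℚ (show 3*j+2*t+6 ≤ 3*j+3*t+7 by omega),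
        Nat.cast_choose ℚ (show 3*j+2*t+7 ≤ 3*j+3*t+9 by omega),
        Nat.cast_choose ℚ (show 3*j+2*t+7 ≤ 3*j+3*t+7 by omega),
        Nat.cast_choose ℚ (show j+t+2 ≤ 2*j+t+2 by omega),
        Nat.cast_choose ℚ (show j+t+2 ≤ 2*j+t+3 by omega),
        Nat.cast_choose ℚ (show j+t+1 ≤ 2*j+t+2 by omega),
        show 3*j+3*t+7 - (3*j+2*t+5) = t+2 by omega,
        show 3*j+3*t+7 - (3*j+2*t+6) = t+1 by omega,
        show 3*j+3*t+9 - (3*j+2*t+7) = t+2 by omega,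
        show 3*j+3*t+7 - (3*j+2*t+7) = t by omega,
        show 2*j+t+2 - (j+t+2) = j by omega,
        show 2*j+t+3 - (j+t+2) = j+1 by omega,
        show 2*j+t+2 - (j+t+1) = j+1 by omega]
    have e1 : (3*j+3*t+9)! = (3*j+3*t+9)*((3*j+3*t+8)*(3*j+3*t+7)!) := by
      rw [show 3*j+3*t+9 = (3*j+3*t+7)+1+1 by ring, Nat.factorial_succ, Nat.factorial_succ]
    have e2 : (3*j+2*t+6)! = (3*j+2*t+6)*(3*j+2*t+5)! := by
      rw [show 3*j+2*t+6 = (3*j+2*t+5)+1 by ring, Nat.factorial_succ]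
    have e3 : (3*j+2*t+7)! = (3*j+2*t+7)*((3*j+2*t+6)*(3*j+2*t+5)!) := by
      rw [show 3*j+2*t+7 = (3*j+2*t+5)+1+1 by ring, Nat.factorial_succ, Nat.factorial_succ]
    have e4 : (t+2)! = (t+2)*((t+1)*(t)!) := by
      rw [show t+2 = t+1+1 by ring, Nat.factorial_succ, Nat.factorial_succ]
    have e5 : (t+1)! = (t+1)*(t)! := Nat.factorial_succ t
    have e6 : (2*j+t+3)! = (2*j+t+3)*(2*j+t+2)! := by
      rw [show 2*j+t+3 = (2*j+t+2)+1 by ring, Nat.factorial_succ]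
    have e7 : (j+t+2)! = (j+t+2)*(j+t+1)! := by
      rw [show j+t+2 = (j+t+1)+1 by ring, Nat.factorial_succ]
    have e8 : (j+1)! = (j+1)*(j)! := Nat.factorial_succ j
    rw [e1, e2, e3, e4, e5, e6, e7, e8]
    have n1 : ((3*j+2*t+5)! : ℚ) ≠ 0 := Nat.cast_ne_zero.mpr (Nat.factorial_ne_zero _)
    have n2 : ((t)! : ℚ) ≠ 0 := Nat.cast_ne_zero.mpr (Nat.factorial_ne_zero _)
    have n3 : ((2*j+t+2)! : ℚ) ≠ 0 := Nat.cast_ne_zero.mpr (Nat.factorial_ne_zero _)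
    have n4 : ((j+t+1)! : ℚ) ≠ 0 := Nat.cast_ne_zero.mpr (Nat.factorial_ne_zero _)
    have n5 : ((j)! : ℚ) ≠ 0 := Nat.cast_ne_zero.mpr (Nat.factorial_ne_zero _)
    push_cast
    field_simp
    ring
  exact_mod_cast key

/-- For `n ≥ 2` and `n-1 ≤ k ≤ 2n-3` the binomial identity
`C(3n-5, n+k-2)·C(k-1, n-2) + C(3n-5, n+k-1)·C(k, n-2)
  = C(3n-3, n+k)·C(k-1, n-2) + ((2n-2)/(n-2))·C(3n-5, n+k)·C(k-1, n-3)`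
holds, stated multiplied through by `n-2` to avoid division. -/
theorem stmt4 (n k : ℕ) (hn : 2 ≤ n) (hnk : (n : ℤ) - 1 ≤ (k : ℤ))
    (hk : (k : ℤ) ≤ 2 * (n : ℤ) - 3) :
    (n - 2) * (Nat.choose (3 * n - 5) (n + k - 2) * Nat.choose (k - 1) (n - 2)) +
      (n - 2) * (Nat.choose (3 * n - 5) (n + k - 1) * Nat.choose k (n - 2)) =
    (n - 2) * (Nat.choose (3 * n - 3) (n + k) * Nat.choose (k - 1) (n - 2)) +
      (2 * n - 2) * (Nat.choose (3 * n - 5) (n + k) * Nat.choose (k - 1) (n - 3)) := by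
  obtain ⟨m, rfl⟩ : ∃ m, n = m + 2 := ⟨n - 2, by omega⟩
  obtain ⟨j, rfl, hj⟩ : ∃ j, k = m + 1 + j ∧ j ≤ m := ⟨k - (m + 1), by omega, by omega⟩
  rw [show m + 2 - 2 = m by omega, show 3 * (m + 2) - 5 = 3 * m + 1 by omega,
      show m + 2 + (m + 1 + j) - 2 = 2 * m + 1 + j by omega,
      show m + 1 + j - 1 = m + j by omega,
      show m + 2 + (m + 1 + j) - 1 = 2 * m + 2 + j by omega,
      show 3 * (m + 2) - 3 = 3 * m + 3 by omega,
      show m + 2 + (m + 1 + j) = 2 * m + 3 + j by omega,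
      show 2 * (m + 2) - 2 = 2 * m + 2 by omega,
      show m + 2 - 3 = m - 1 by omega]
  by_cases hgen : j + 2 ≤ m
  · obtain ⟨t, rfl⟩ : ∃ t, m = j + t + 2 := ⟨m - j - 2, by omega⟩
    rw [show 3 * (j + t + 2) + 1 = 3*j+3*t+7 by ring,
        show 2 * (j + t + 2) + 1 + j = 3*j+2*t+5 by ring,
        show 2 * (j + t + 2) + 2 + j = 3*j+2*t+6 by ring,
        show 2 * (j + t + 2) + 3 + j = 3*j+2*t+7 by ring,
        show 3 * (j + t + 2) + 3 = 3*j+3*t+9 by ring,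
        show j + t + 2 + j = 2*j+t+2 by ring,
        show j + t + 2 + 1 + j = 2*j+t+3 by ring,
        show 2 * (j + t + 2) + 2 = 2*j+2*t+6 by ring,
        show j + t + 2 - 1 = j+t+1 by omega]
    exact gkey j t
  · have : j = m ∨ j + 1 = m := by omega
    rcases this with h | h
    · subst h
      rw [show 2 * j + 1 + j = 3 * j + 1 by ring,
          show 2 * j + 2 + j = 3 * j + 2 by ring,
          show 2 * j + 3 + j = 3 * j + 3 by ring,
          Nat.choose_self, Nat.choose_self,
          Nat.choose_eq_zero_of_lt (show 3 * j + 1 < 3 * j + 2 by omega),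
          Nat.choose_eq_zero_of_lt (show 3 * j + 1 < 3 * j + 3 by omega)]
      ring
    · subst h
      have hsym : Nat.choose (2 * j + 1) j = Nat.choose (2 * j + 1) (j + 1) := by
        have := Nat.choose_symm (show j + 1 ≤ 2 * j + 1 by omega)
        rwa [show 2 * j + 1 - (j + 1) = j by omega] at this
      rw [show 3 * (j + 1) + 1 = (3 * j + 3) + 1 by ring,
          show 2 * (j + 1) + 1 + j = 3 * j + 3 by ring,
          show 2 * (j + 1) + 2 + j = (3 * j + 3) + 1 by ring,
          show 2 * (j + 1) + 3 + j = 3 * j + 5 by ring,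
          show 3 * (j + 1) + 3 = (3 * j + 5) + 1 by ring,
          show j + 1 + j = 2 * j + 1 by ring,
          show j + 1 + 1 + j = (2 * j + 1) + 1 by ring,
          show j + 1 - 1 = j by omega,
          show 2 * (j + 1) + 2 = 2 * j + 4 by ring]
      rw [Nat.choose_succ_self_right, Nat.choose_self, Nat.choose_succ_self_right,
          Nat.choose_eq_zero_of_lt (show (3 * j + 3) + 1 < 3 * j + 5 by omega),
          Nat.choose_succ_succ (2 * j + 1) j, hsym]
      ring
end

section
/- If a non-crossing connected graph on 2n vertices is invariant under rotation by π and has an odd number of edges, then exactly one of its edges is a diameter (joins a pair of antipodal vertices). -/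
/-- Two chords of the circle (with vertices `0 < 1 < ⋯ < n-1` in convex position)
cross iff their endpoints interleave. -/
def Crosses {n : ℕ} (e f : Sym2 (Fin n)) : Prop :=
  ∃ a b c d : Fin n, e = s(a, b) ∧ f = s(c, d) ∧ a < c ∧ c < b ∧ b < d

/-- A set of edges is non-crossing (and has no loops). -/
def IsNC {n : ℕ} (E : Finset (Sym2 (Fin n))) : Prop :=
  (∀ e ∈ E, ¬ e.IsDiag) ∧ ∀ e ∈ E, ∀ f ∈ E, ¬ Crosses e f

/-- The simple graph on `Fin n` determined by an edge set. -/
def graphOf {n : ℕ} (E : Finset (Sym2 (Fin n))) : SimpleGraph (Fin n) :=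
  SimpleGraph.fromEdgeSet (↑E)

/-- Non-crossing connected graph. -/
def IsNCC {n : ℕ} (E : Finset (Sym2 (Fin n))) : Prop :=
  IsNC E ∧ (graphOf E).Connected

/-- Number of non-crossing connected graphs on `n` vertices with `k` edges. -/
noncomputable def ncc (n k : ℕ) : ℕ :=
  Nat.card {E : Finset (Sym2 (Fin n)) // IsNCC E ∧ E.card = k}

/-- The edge set contains the edge `{1, n}` (in `Fin n` coordinates, `{0, n-1}`). -/
def HasEdge1n {n : ℕ} (E : Finset (Sym2 (Fin n))) : Prop :=
  ∃ a b : Fin n, (a : ℕ) = 0 ∧ (b : ℕ) = n - 1 ∧ s(a, b) ∈ E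

/-- Number of non-crossing connected graphs on `n` vertices with `k` edges
containing the edge `{1, n}`. -/
noncomputable def nccEdge (n k : ℕ) : ℕ :=
  Nat.card {E : Finset (Sym2 (Fin n)) // IsNCC E ∧ E.card = k ∧ HasEdge1n E}

/-- Rotation of the circle of `n` vertices by `m` positions. -/
def rotMap (n m : ℕ) : Fin n → Fin n := fun i => ⟨(i.1 + m) % n, Nat.mod_lt _ i.pos⟩

/-- The edge set is fixed under rotation by `m` positions. -/
def RotInv (n m : ℕ) (E : Finset (Sym2 (Fin n))) : Prop :=
  ∀ e ∈ E, Sym2.map (rotMap n m) e ∈ E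

/-- Number of non-crossing connected graphs on `n` vertices with `k` edges fixed
under rotation by `m` positions. -/
noncomputable def nccRot (n k m : ℕ) : ℕ :=
  Nat.card {E : Finset (Sym2 (Fin n)) // IsNCC E ∧ E.card = k ∧ RotInv n m E}


lemma exists_fixed_aux {α : Type*} [DecidableEq α] (f : α → α)
    (hff : ∀ e, f (f e) = e) :
    ∀ s : Finset α, (∀ e ∈ s, f e ∈ s) → Odd s.card → ∃ e ∈ s, f e = e := by
  intro s
  induction s using Finset.strongInduction with
  | _ s ih =>
    intro hmap hodd
    by_cases hfix : ∃ e ∈ s, f e = e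
    · exact hfix
    push_neg at hfix
    obtain ⟨e, he⟩ := Finset.card_pos.mp hodd.pos
    have hfe : f e ∈ s := hmap e he
    have hne : f e ≠ e := hfix e he
    have hsubset : ({e, f e} : Finset α) ⊆ s := by
      intro x hx; simp at hx; rcases hx with rfl | rfl <;> assumption
    have hcard2 : ({e, f e} : Finset α).card = 2 := by
      rw [Finset.card_insert_of_notMem (by simp [Ne.symm hne])]; simp
    have hss : s \ {e, f e} ⊂ s :=
      Finset.sdiff_ssubset hsubset ⟨e, by simp⟩
    have hmap' : ∀ x ∈ s \ {e, f e}, f x ∈ s \ {e, f e} := by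
      intro x hx
      rw [Finset.mem_sdiff] at hx ⊢
      obtain ⟨hxs, hxne⟩ := hx
      simp only [Finset.mem_insert, Finset.mem_singleton] at hxne ⊢
      push_neg at hxne ⊢
      refine ⟨hmap x hxs, ?_, ?_⟩
      · intro h; apply hxne.2; rw [← hff x, h]
      · intro h; apply hxne.1
        have := congrArg f h
        rwa [hff, hff] at this
    have hodd' : Odd (s \ {e, f e}).card := by
      rw [Finset.card_sdiff_of_subset hsubset, hcard2]
      have h2 : 2 ≤ s.card := by
        calc 2 = ({e, f e} : Finset α).card := hcard2.symm
        _ ≤ s.card := Finset.card_le_card hsubset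
      obtain ⟨k, hk⟩ := hodd
      refine ⟨k - 1, by omega⟩
    obtain ⟨x, hx, hfx⟩ := ih _ hss hmap' hodd'
    exact absurd hfx (hfix x (Finset.mem_sdiff.mp hx).1)

lemma diam_repr_aux (n : ℕ) (hn : 0 < n) (a b : Fin (2*n))
    (hb : (b:ℕ) = ((a:ℕ)+n) % (2*n)) :
    ∃ c d : Fin (2*n), s(a,b) = s(c,d) ∧ (c:ℕ) < n ∧ (d:ℕ) = (c:ℕ) + n := by
  have ha2 : (a:ℕ) < 2*n := a.isLt
  by_cases h : (a:ℕ) < n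
  · refine ⟨a, b, rfl, h, ?_⟩
    rw [hb, Nat.mod_eq_of_lt (by omega)]
  · have hmod : ((a:ℕ)+n) % (2*n) = (a:ℕ) - n := by
      rw [Nat.mod_eq_sub_mod (by omega)]
      have : (a:ℕ) + n - 2*n = (a:ℕ) - n := by omega
      rw [this, Nat.mod_eq_of_lt (by omega)]
    refine ⟨b, a, Sym2.eq_swap, ?_, ?_⟩
    · rw [hb, hmod]; omega
    · rw [hb, hmod]; omega

lemma diam_eq_aux (n : ℕ) (hn : 0 < n) (E : Finset (Sym2 (Fin (2*n)))) (hnc : IsNC E)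
    (a b c d : Fin (2*n)) (hab : s(a,b) ∈ E) (hcd : s(c,d) ∈ E)
    (hb : (b:ℕ) = ((a:ℕ)+n) % (2*n)) (hd : (d:ℕ) = ((c:ℕ)+n) % (2*n)) :
    s(a,b) = s(c,d) := by
  obtain ⟨p, q, hpq, hp, hq⟩ := diam_repr_aux n hn a b hb
  obtain ⟨r, s, hrs, hr, hs⟩ := diam_repr_aux n hn c d hd
  rw [hpq, hrs]
  rcases lt_trichotomy (p:ℕ) (r:ℕ) with h | h | h
  · exfalso
    apply hnc.2 _ (hpq ▸ hab) _ (hrs ▸ hcd)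
    exact ⟨p, q, r, s, rfl, rfl, by rw [Fin.lt_def]; omega,
      by rw [Fin.lt_def]; omega, by rw [Fin.lt_def]; omega⟩
  · have hpr : p = r := Fin.ext h
    have hqs : q = s := Fin.ext (by omega)
    rw [hpr, hqs]
  · exfalso
    apply hnc.2 _ (hrs ▸ hcd) _ (hpq ▸ hab)
    exact ⟨r, s, p, q, rfl, rfl, by rw [Fin.lt_def]; omega,
      by rw [Fin.lt_def]; omega, by rw [Fin.lt_def]; omega⟩


/-- A non-crossing connected graph on `2n` vertices that is invariant under the
antipodal rotation `i ↦ i + n` and has an odd number of edges contains exactly one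
diameter, i.e. exactly one edge of the form `{a, a+n}`. -/
theorem stmt12 (n : ℕ) (E : Finset (Sym2 (Fin (2 * n)))) (hE : IsNCC E)
    (hrot : RotInv (2 * n) n E) (hodd : Odd E.card) :
    ∃! e : Sym2 (Fin (2 * n)), e ∈ E ∧
      ∃ a b : Fin (2 * n), e = s(a, b) ∧ (b : ℕ) = ((a : ℕ) + n) % (2 * n) := by
  rcases Nat.eq_zero_or_pos n with rfl | hn
  · exfalso
    obtain ⟨e, he⟩ := Finset.card_pos.mp hodd.pos
    induction e using Sym2.ind with
    | _ a b => exact a.elim0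
  set σ : Fin (2*n) → Fin (2*n) := rotMap (2*n) n with hσ
  have hσval : ∀ x : Fin (2*n), (σ x : ℕ) = ((x:ℕ) + n) % (2*n) := fun x => rfl
  have hσσ : ∀ x : Fin (2*n), σ (σ x) = x := by
    intro x
    apply Fin.ext
    rw [hσval, hσval, Nat.mod_add_mod]
    have : (x:ℕ) + n + n = (x:ℕ) + 2*n := by ring
    rw [this, Nat.add_mod_right, Nat.mod_eq_of_lt x.isLt]
  have hnofix : ∀ x : Fin (2*n), σ x ≠ x := by
    intro x hx
    have hx' : ((x:ℕ) + n) % (2*n) = (x:ℕ) := by rw [← hσval, hx]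
    have hlt : (x:ℕ) < 2*n := x.isLt
    by_cases h : (x:ℕ) + n < 2*n
    · rw [Nat.mod_eq_of_lt h] at hx'; omega
    · rw [Nat.mod_eq_sub_mod (by omega), Nat.mod_eq_of_lt (by omega)] at hx'
      omega
  have hff : ∀ e : Sym2 (Fin (2*n)), Sym2.map σ (Sym2.map σ e) = e := by
    intro e
    rw [Sym2.map_map]
    have : σ ∘ σ = id := funext hσσ
    rw [this, Sym2.map_id]; rfl
  obtain ⟨e, heE, hfe⟩ := exists_fixed_aux (Sym2.map σ) hff E hrot hodd
  induction e using Sym2.ind with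
  | _ a b =>
    rw [Sym2.map_pair_eq, Sym2.eq_iff] at hfe
    have hba : (b:ℕ) = ((a:ℕ) + n) % (2*n) := by
      rcases hfe with ⟨h1, _⟩ | ⟨h1, _⟩
      · exact absurd h1 (hnofix a)
      · rw [← h1]; rfl
    refine ⟨s(a,b), ⟨heE, a, b, rfl, hba⟩, ?_⟩
    rintro f ⟨hfE, c, d, rfl, hdc⟩
    exact diam_eq_aux n hn E hE.1 c d a b hfE heE hdc hba
end

section
/- Let y(z,w) ∈ ℚ[[z,w]] be the unique power series with y(0,w)=0 satisfying y = z·w(1+y)^3/(1−wy). Then for n ≥ 1 and n ≤ k ≤ 2n-1, the coefficient of z^n w^k in log(1+y) equals (1/n) * binom(3n-1, n+k) * binom(k-1, n-1). -/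
/-!
Over the fraction field `K` of `ℚ[[w]]` the equation reads `y = z φ(y)` with
`φ(u) = w (1 + u)³ / (1 - w u)`, whose constant term `w` is now invertible. Lagrange inversion
gives `n [zⁿ] log (1 + y) = [uⁿ⁻¹] φ(u)ⁿ / (1 + u) = [uⁿ⁻¹] wⁿ (1 + u)^(3n-1) (1 - w u)^(-n)`,
in which `wᵏ` occurs only in `[u^(2n-1-k)] (1 + u)^(3n-1) · [u^(k-n)] (1 - w u)^(-n)`, the second
factor being `C(k-1, n-1) w^(k-n)`.

Lagrange inversion itself comes down, after truncating at degree `n`, to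
`[Xⁿ] (XV)ˢ (XV)' V^(-(n+1)) = δₛₙ` for `V(0) ≠ 0`. For `s < n` this is the coefficient of
`X^(j+1)` in `(XV)' V^(-(j+2)) = V^(-(j+1)) + X V' V^(-(j+2))`, which vanishes because
`(V^(-(j+1)))' = -(j+1) V' V^(-(j+2))`.
-/

open PowerSeries

/-- The series `w`, viewed as a constant (in `z`) power series in `ℚ[[w]][[z]]`. -/
noncomputable def Wvar : PowerSeries (PowerSeries ℚ) := C (R := PowerSeries ℚ) X

open Finset

namespace PowerSeries

lemma coeff_one_add_X_pow {R : Type*} [CommSemiring R] (m i : ℕ) :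
    coeff i ((1 + X : R⟦X⟧) ^ m) = m.choose i := by
  rw [show (1 + X : R⟦X⟧) ^ m = ((1 + Polynomial.X : Polynomial R) ^ m : Polynomial R) by
      push_cast; rfl,
    Polynomial.coeff_coe, Polynomial.coeff_one_add_X_pow]

lemma derivative_map {R S : Type*} [CommSemiring R] [CommSemiring S] (f : R →+* S) (g : R⟦X⟧) :
    d⁄dX S (map f g) = map f (d⁄dX R g) := by
  ext n
  simp [coeff_derivative, coeff_map]

lemma coeff_sum_antidiagonal_C_mul_X_pow {R : Type*} [Semiring R] (a : ℕ × ℕ → R) {m c k : ℕ}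
    (hck : c ≤ k) (hk : k ≤ c + m) :
    coeff k (∑ p ∈ antidiagonal m, C (a p) * X ^ (c + p.2)) = a (m + c - k, k - c) := by
  rw [map_sum, sum_eq_single_of_mem (m + c - k, k - c) (by simp; omega)]
  · rw [coeff_C_mul_X_pow, if_pos (by omega)]
  · rintro ⟨i, j⟩ hij hne
    rw [HasAntidiagonal.mem_antidiagonal] at hij
    rw [coeff_C_mul_X_pow, if_neg]
    contrapose! hne
    ext <;> simp <;> omega

lemma constantCoeff_subst_of_constantCoeff_eq_zero {R : Type*} [CommRing R] {Y : R⟦X⟧}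
    (hY : constantCoeff Y = 0) (f : R⟦X⟧) : constantCoeff (f.subst Y) = constantCoeff f := by
  have hs : HasSubst Y := HasSubst.of_constantCoeff_zero' hY
  conv_lhs => rw [eq_X_mul_shift_add_const f]
  rw [subst_add hs, subst_mul hs, subst_X hs, subst_C]
  simp [hY]
  exact MvPowerSeries.constantCoeff_C _

section Field

variable {K : Type*} [Field K]

lemma subst_inv {Y : K⟦X⟧} (hY : constantCoeff Y = 0) {f : K⟦X⟧} (hf : constantCoeff f ≠ 0) :
    f⁻¹.subst Y = (f.subst Y)⁻¹ := by
  have hs : HasSubst Y := HasSubst.of_constantCoeff_zero' hY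
  rw [eq_inv_iff_mul_eq_one (by rwa [constantCoeff_subst_of_constantCoeff_eq_zero hY]),
    ← subst_mul hs, PowerSeries.inv_mul_cancel f hf, ← map_one C, subst_C, map_one, map_one]

lemma inv_one_sub_C_mul_X (w : K) : (1 - C w * X)⁻¹ = rescale w (mk 1) := by
  rw [inv_eq_iff_mul_eq_one (by simp), ← rescale_X, ← map_one (rescale w), ← map_sub,
    ← map_mul, mk_one_mul_one_sub_eq_one, map_one]

lemma coeff_inv_one_sub_C_mul_X_pow (w : K) (n i : ℕ) :
    coeff i ((1 - C w * X)⁻¹ ^ (n + 1)) = w ^ i * (n + i).choose n := by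
  rw [inv_one_sub_C_mul_X, ← map_pow, mk_one_pow_eq_mk_choose_add, coeff_rescale, coeff_mk]

variable [CharZero K] {V : K⟦X⟧}

lemma coeff_derivative_X_mul_mul_inv_pow_eq_zero (hV : constantCoeff V ≠ 0) (j : ℕ) :
    coeff (j + 1) (d⁄dX K (X * V) * V⁻¹ ^ (j + 2)) = 0 := by
  have hVV := PowerSeries.mul_inv_cancel V hV
  have hsplit :
      d⁄dX K (X * V) * V⁻¹ ^ (j + 2) = V⁻¹ ^ (j + 1) + X * (d⁄dX K V * V⁻¹ ^ (j + 2)) := by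
    rw [Derivation.leibniz, derivative_X, smul_eq_mul, smul_eq_mul]
    linear_combination (V⁻¹ ^ (j + 1)) * hVV
  have hder := congrArg (coeff j) (Derivation.leibniz_pow (d⁄dX K) V⁻¹ (j + 1))
  rw [derivative_inv', coeff_derivative, nsmul_eq_mul, smul_eq_mul, add_tsub_cancel_right] at hder
  have hsum :
      (j + 1 : K) * (coeff (j + 1) (V⁻¹ ^ (j + 1)) + coeff j (d⁄dX K V * V⁻¹ ^ (j + 2))) = 0 := by
    rw [show V⁻¹ ^ j * (-V⁻¹ ^ 2 * d⁄dX K V) = -(d⁄dX K V * V⁻¹ ^ (j + 2)) by ring,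
      ← map_natCast C, coeff_C_mul, map_neg] at hder
    push_cast at hder
    linear_combination hder
  rw [hsplit, map_add, coeff_succ_X_mul]
  exact (mul_eq_zero.mp hsum).resolve_left (by exact_mod_cast j.succ_ne_zero)

lemma coeff_X_mul_pow_mul_derivative_mul_inv_pow (hV : constantCoeff V ≠ 0) (s n : ℕ) :
    coeff n ((X * V) ^ s * d⁄dX K (X * V) * V⁻¹ ^ (n + 1)) = if s = n then 1 else 0 := by
  have hVV := PowerSeries.mul_inv_cancel V hV
  have cancel : ∀ G : K⟦X⟧, ∀ i, (X * V) ^ s * G * V⁻¹ ^ (s + i) = X ^ s * (G * V⁻¹ ^ i) := by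
    intro G i
    rw [pow_add, mul_pow]
    linear_combination (X ^ s * G * V⁻¹ ^ i) *
      (by rw [← mul_pow, hVV, one_pow] : V ^ s * V⁻¹ ^ s = 1)
  rcases lt_trichotomy s n with hs | rfl | hs
  · obtain ⟨j, rfl⟩ := Nat.exists_eq_add_of_lt hs
    rw [if_neg hs.ne, show s + j + 1 + 1 = s + (j + 2) by ring, cancel, add_assoc, add_comm,
      coeff_X_pow_mul, coeff_derivative_X_mul_mul_inv_pow_eq_zero hV]
  · rw [if_pos rfl, cancel, coeff_X_pow_mul', if_pos le_rfl, Nat.sub_self, pow_one,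
      Derivation.leibniz, derivative_X]
    simp [hV]
  · obtain ⟨j, rfl⟩ := Nat.exists_eq_add_of_lt hs
    rw [if_neg hs.ne', show (X * V) ^ (n + j + 1) * d⁄dX K (X * V) * V⁻¹ ^ (n + 1) =
      X ^ (n + 1) * (X ^ j * V ^ (n + j + 1) * d⁄dX K (X * V) * V⁻¹ ^ (n + 1)) by ring,
      coeff_X_pow_mul', if_neg (by omega)]

theorem coeff_subst_X_mul_mul_derivative_mul_inv_pow (hV : constantCoeff V ≠ 0) (f : K⟦X⟧)
    (n : ℕ) : coeff n (f.subst (X * V) * d⁄dX K (X * V) * V⁻¹ ^ (n + 1)) = coeff n f := by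
  have hs : HasSubst (X * V) := HasSubst.of_constantCoeff_zero' (by simp)
  set g : K⟦X⟧ := mk fun i ↦ coeff (i + (n + 1)) f
  have htail :
      coeff n ((X * V) ^ (n + 1) * g.subst (X * V) * d⁄dX K (X * V) * V⁻¹ ^ (n + 1)) = 0 := by
    rw [show (X * V) ^ (n + 1) * g.subst (X * V) * d⁄dX K (X * V) * V⁻¹ ^ (n + 1) =
      X ^ (n + 1) * ((V * V⁻¹) ^ (n + 1) * g.subst (X * V) * d⁄dX K (X * V)) by ring,
      coeff_X_pow_mul', if_neg (by omega)]
  conv_lhs => rw [eq_X_pow_mul_shift_add_trunc (n + 1) f]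
  rw [subst_add hs, subst_mul hs, subst_pow hs, subst_X hs, subst_coe hs, Polynomial.aeval_def,
    eval₂_trunc_eq_sum_range, add_mul, add_mul, map_add, htail, zero_add, sum_mul, sum_mul, map_sum]
  have hterm : ∀ i, coeff n (algebraMap K K⟦X⟧ (coeff i f) * (X * V) ^ i * d⁄dX K (X * V) *
      V⁻¹ ^ (n + 1)) = if i = n then coeff n f else 0 := by
    intro i
    rw [algebraMap_eq, mul_assoc, mul_assoc, ← mul_assoc ((X * V) ^ i), coeff_C_mul,
      coeff_X_mul_pow_mul_derivative_mul_inv_pow hV]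
    split_ifs with h <;> simp [h]
  rw [sum_congr rfl fun i _ ↦ hterm i, sum_ite_eq', if_pos (self_mem_range_succ n)]

theorem coeff_subst_mul_derivative_of_eq_X_mul_subst {φ Y : K⟦X⟧} (hφ : constantCoeff φ ≠ 0)
    (hY : Y = X * φ.subst Y) (g : K⟦X⟧) (n : ℕ) :
    coeff n (g.subst Y * d⁄dX K Y) = coeff n (g * φ ^ (n + 1)) := by
  have hY0 : constantCoeff Y = 0 := by rw [hY]; simp
  have hs : HasSubst Y := HasSubst.of_constantCoeff_zero' hY0
  have hV : constantCoeff (φ.subst Y) ≠ 0 := by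
    rwa [constantCoeff_subst_of_constantCoeff_eq_zero hY0]
  have hVV := PowerSeries.mul_inv_cancel _ hV
  rw [← coeff_subst_X_mul_mul_derivative_mul_inv_pow hV (g * φ ^ (n + 1)), ← hY, subst_mul hs,
    subst_pow hs]
  congr 1
  linear_combination (-(g.subst Y * d⁄dX K Y)) *
    (by rw [← mul_pow, hVV, one_pow] : (φ.subst Y) ^ (n + 1) * (φ.subst Y)⁻¹ ^ (n + 1) = 1)

lemma coeff_succ_mul_of_log {w : K} (hw : w ≠ 0) {Y Λ : K⟦X⟧} (hY0 : constantCoeff Y = 0)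
    (hY : Y * (1 - C w * Y) = X * C w * (1 + Y) ^ 3) (hΛ : (1 + Y) * d⁄dX K Λ = d⁄dX K Y)
    (n : ℕ) :
    coeff (n + 1) Λ * (n + 1) = ∑ p ∈ antidiagonal n,
      ((3 * n + 2).choose p.1 * (n + p.2).choose n : K) * w ^ (n + 1 + p.2) := by
  have hs : HasSubst Y := HasSubst.of_constantCoeff_zero' hY0
  have hD : constantCoeff (1 - C w * X) ≠ 0 := by simp
  have hU : constantCoeff (1 + X : K⟦X⟧) ≠ 0 := by simp
  set φ : K⟦X⟧ := C w * (1 + X) ^ 3 * (1 - C w * X)⁻¹ with hφ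
  have hφ0 : constantCoeff φ ≠ 0 := by simp [φ, hw]
  have hYφ : Y = X * φ.subst Y := by
    rw [hφ, subst_mul hs, subst_mul hs, subst_inv hY0 hD]
    have hC : ∀ r : K, (C r).subst Y = C r := fun r ↦ subst_C r
    have h1 : (1 : K⟦X⟧).subst Y = 1 := by rw [← map_one C, hC, map_one]
    simp only [subst_pow hs, subst_add hs, subst_sub hs, subst_mul hs, subst_X hs, hC, h1]
    rw [← mul_assoc, eq_mul_inv_iff_mul_eq (by simp [hY0])]
    linear_combination hY
  have hΛ' : d⁄dX K Λ = (1 + X : K⟦X⟧)⁻¹.subst Y * d⁄dX K Y := by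
    rw [subst_inv hY0 hU, subst_add hs, subst_X hs, ← map_one C, subst_C, map_one, mul_comm,
      eq_mul_inv_iff_mul_eq (by simp [hY0]), mul_comm, hΛ]
  have hUU := PowerSeries.inv_mul_cancel _ hU
  calc coeff (n + 1) Λ * (n + 1) = coeff n (d⁄dX K Λ) := (coeff_derivative Λ n).symm
    _ = coeff n ((1 + X)⁻¹ * φ ^ (n + 1)) := by
      rw [hΛ', coeff_subst_mul_derivative_of_eq_X_mul_subst hφ0 hYφ]
    _ = coeff n (C (w ^ (n + 1)) * ((1 + X) ^ (3 * n + 2) * (1 - C w * X)⁻¹ ^ (n + 1))) := by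
      congr 1
      rw [hφ, mul_pow, mul_pow, ← pow_mul, map_pow]
      linear_combination
        (C w ^ (n + 1) * (1 + X) ^ (3 * n + 2) * (1 - C w * X)⁻¹ ^ (n + 1)) * hUU
    _ = _ := by
      rw [coeff_C_mul, coeff_mul, mul_sum]
      refine sum_congr rfl fun p _ ↦ ?_
      rw [coeff_one_add_X_pow, coeff_inv_one_sub_C_mul_X_pow]
      ring

end Field

end PowerSeries

theorem stmt18_general (y L : PowerSeries (PowerSeries ℚ))
    (h0 : constantCoeff (R := PowerSeries ℚ) y = 0)
    (hy : y * (1 - Wvar * y) = X * Wvar * (1 + y) ^ 3)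
    (hL : (1 + y) * derivativeFun L = derivativeFun y)
    (n k : ℕ) (hn : 1 ≤ n) (hnk : n ≤ k) (hk : (k : ℤ) ≤ 2 * (n : ℤ) - 1) :
    coeff (R := ℚ) k (coeff (R := PowerSeries ℚ) n L) =
      (Nat.choose (3 * n - 1) (n + k) * Nat.choose (k - 1) (n - 1) : ℚ) / n := by
  obtain ⟨m, rfl⟩ : ∃ m, n = m + 1 := ⟨n - 1, by omega⟩
  let K := FractionRing ℚ⟦X⟧
  have : CharZero K := charZero_of_injective_algebraMap (algebraMap ℚ K).injective
  let ι := algebraMap ℚ⟦X⟧ K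
  have hL' : (1 + y) * d⁄dX _ L = d⁄dX _ y := hL
  have hι : Function.Injective ι := IsFractionRing.injective _ _
  have hw : ι X ≠ 0 := (map_ne_zero_iff ι hι).mpr X_ne_zero
  have key := coeff_succ_mul_of_log hw (Y := map ι y) (Λ := map ι L)
    (by simp [← coeff_zero_eq_constantCoeff_apply, coeff_map, h0])
    (by simpa [Wvar] using congrArg (map ι) hy)
    (by simpa [derivative_map] using congrArg (map ι) hL') m
  have hR : coeff (m + 1) L * (m + 1) = ∑ p ∈ antidiagonal m,
      C (((3 * m + 2).choose p.1 * (m + p.2).choose m : ℕ) : ℚ) * X ^ (m + 1 + p.2) := by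
    apply hι
    simpa [map_sum, coeff_map] using key
  have hQ := congrArg (coeff k) hR
  rw [coeff_sum_antidiagonal_C_mul_X_pow _ (by omega) (by omega),
    show (m + 1 : ℚ⟦X⟧) = C ((m : ℚ) + 1) by simp, coeff_mul_C,
    Nat.choose_symm_of_eq_add (by omega : 3 * m + 2 = (m + (m + 1) - k) + (m + 1 + k)),
    show m + (k - (m + 1)) = k - 1 by omega] at hQ
  rw [eq_div_iff (by positivity), show 3 * (m + 1) - 1 = 3 * m + 2 by omega, Nat.add_sub_cancel]
  push_cast at hQ ⊢
  exact hQ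

/-- Let `y ∈ ℚ[[z,w]]` be the series with zero constant term satisfying
`y = z·w(1+y)³/(1-wy)` (stated multiplied out), and let `L = log(1+y)` be the
formal logarithm, characterized by `L(0) = 0` and `(1+y)·L' = y'` (derivative in
`z`). Then for `n ≥ 1` and `n ≤ k ≤ 2n-1`, the coefficient of `zⁿwᵏ` in `L`
equals `(1/n)·C(3n-1, n+k)·C(k-1, n-1)`. -/
theorem stmt18 (y L : PowerSeries (PowerSeries ℚ))
    (h0 : constantCoeff (R := PowerSeries ℚ) y = 0)
    (hy : y * (1 - Wvar * y) = X * Wvar * (1 + y) ^ 3)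
    (hL0 : constantCoeff (R := PowerSeries ℚ) L = 0)
    (hL : (1 + y) * derivativeFun L = derivativeFun y)
    (n k : ℕ) (hn : 1 ≤ n) (hnk : n ≤ k) (hk : (k : ℤ) ≤ 2 * (n : ℤ) - 1) :
    coeff (R := ℚ) k (coeff (R := PowerSeries ℚ) n L) =
      (Nat.choose (3 * n - 1) (n + k) * Nat.choose (k - 1) (n - 1) : ℚ) / n :=
  stmt18_general y L h0 hy hL n k hn hnk hk
end

section
/- Let y ∈ ℚ[[z,w]] be the unique solution with zero constant term of y = z·w(1+y)^3/(1−wy). Then for n ≥ 3, the coefficient of z^{n-2} w^k in y equals (1/(n-2)) * binom(3n-6, n+k-1) * binom(k-1, n-3), and the coefficient of z^{n-2} w^k in y^2 equals (2/(n-2)) * binom(3n-6, n+k) * binom(k-1, n-3). -/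
open PowerSeries

/-- Binomial coefficient of integers, taken to be `0` when `b < 0` or `b > a`. -/
def ichoose (a b : ℤ) : ℤ :=
  if 0 ≤ b ∧ b ≤ a then (a.toNat.choose b.toNat : ℤ) else 0

/-!
Write `y = z u`. The equation says `u = φ(y)` with `φ(t) = w (1 + t)³ / (1 - w t)`, so Lagrange
inversion gives `m [z^m] y^j = j [t^(m-j)] φ(t)^m`, and `[t^p] (1 + t)^(3m) (1 - w t)^(-m)` is a
convolution of two binomial sequences. Lagrange inversion follows from the residue identity
`[z^p] u^(-p-1) y' y^r = δ_{r,p}`: for `c = u⁻¹` one has `c^(q+1) y' = c^q + z c^(q+1) u'` and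
`(c^q)' = -q c^(q+1) u'`, so the two contributions to `[z^q]` cancel unless `q = 0`.
The residue argument inverts `u`, whose constant term is `w`, so the computation is done in
`ℚ((w))[[z]]`, into which `ℚ[[w]][[z]]` embeds.
-/

namespace PowerSeries
variable {R : Type*} [CommRing R]

theorem coeff_one_add_X_pow_mul_rescale_mk_choose (w : R) (N d p : ℕ) :
    coeff p ((1 + X) ^ N * rescale w (mk fun n ↦ ((d + n).choose d : R))) =
      ∑ i ∈ Finset.range (p + 1), (N.choose (p - i) * (d + i).choose d * w ^ i : R) := by
  have hbinom : ((1 + X) ^ N : R⟦X⟧) = ((1 + Polynomial.X) ^ N : Polynomial R) := by simp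
  rw [mul_comm, coeff_mul, Finset.Nat.sum_antidiagonal_eq_sum_range_succ
    (fun i j ↦ coeff i (rescale w (mk fun n ↦ ((d + n).choose d : R))) * coeff j ((1 + X) ^ N))]
  refine Finset.sum_congr rfl fun i _ ↦ ?_
  rw [coeff_rescale, coeff_mk, hbinom, Polynomial.coeff_coe, Polynomial.coeff_one_add_X_pow]
  ring

variable [IsAddTorsionFree R]

theorem coeff_inv_pow_succ_mul_derivative_X_mul (u : R⟦X⟧ˣ) (q : ℕ) :
    coeff q ((↑u⁻¹ : R⟦X⟧) ^ (q + 1) * d⁄dX R (X * (u : R⟦X⟧))) = if q = 0 then 1 else 0 := by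
  set c : R⟦X⟧ := ↑u⁻¹ with hc
  have hcu : c * u = 1 := u.inv_mul
  have hsplit : c ^ (q + 1) * d⁄dX R (X * (u : R⟦X⟧)) =
      c ^ q + X * (c ^ (q + 1) * d⁄dX R (u : R⟦X⟧)) := by
    rw [Derivation.leibniz, derivative_X, smul_eq_mul, smul_eq_mul]
    linear_combination c ^ q * hcu
  rw [hsplit, map_add]
  rcases q with _ | s
  · simp
  · have hderiv : d⁄dX R (c ^ (s + 1)) = -((s + 1 : ℕ) • (c ^ (s + 2) * d⁄dX R (u : R⟦X⟧))) := by
      rw [derivative_pow, hc, derivative_inv, nsmul_eq_mul, Nat.add_sub_cancel]; ring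
    have hcoeff := coeff_derivative (c ^ (s + 1)) s
    rw [hderiv, map_neg, map_nsmul, nsmul_eq_mul] at hcoeff
    rw [coeff_succ_X_mul, if_neg s.succ_ne_zero]
    apply nsmul_right_injective s.succ_ne_zero
    simp only [nsmul_eq_mul, smul_zero]
    push_cast at hcoeff ⊢
    linear_combination -hcoeff

theorem coeff_inv_pow_succ_mul_derivative_X_mul_mul_pow (u : R⟦X⟧ˣ) (p r : ℕ) :
    coeff p ((↑u⁻¹ : R⟦X⟧) ^ (p + 1) * d⁄dX R (X * (u : R⟦X⟧)) * (X * (u : R⟦X⟧)) ^ r) =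
      if r = p then 1 else 0 := by
  set c : R⟦X⟧ := ↑u⁻¹
  have hsplit : c ^ (p + 1) * d⁄dX R (X * (u : R⟦X⟧)) * (X * (u : R⟦X⟧)) ^ r =
      X ^ r * (c ^ (p + 1) * (u : R⟦X⟧) ^ r * d⁄dX R (X * (u : R⟦X⟧))) := by ring
  rw [hsplit, coeff_X_pow_mul']
  by_cases hrp : r ≤ p
  · rw [if_pos hrp]
    have hpow : c ^ (p + 1) * (u : R⟦X⟧) ^ r = c ^ (p - r + 1) := by
      rw [show p + 1 = p - r + 1 + r by omega, pow_add, mul_assoc, ← mul_pow, u.inv_mul,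
        one_pow, mul_one]
    rw [hpow, coeff_inv_pow_succ_mul_derivative_X_mul]
    exact if_congr (by omega) rfl rfl
  · rw [if_neg hrp, if_neg (by omega)]

theorem coeff_inv_pow_succ_mul_derivative_X_mul_mul_aeval (u : R⟦X⟧ˣ) (p : ℕ)
    (P : Polynomial R) :
    coeff p ((↑u⁻¹ : R⟦X⟧) ^ (p + 1) * d⁄dX R (X * (u : R⟦X⟧)) *
      Polynomial.aeval (X * (u : R⟦X⟧)) P) = P.coeff p := by
  induction P using Polynomial.induction_on' with
  | add P Q hP hQ => rw [map_add, mul_add, map_add, hP, hQ, Polynomial.coeff_add]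
  | monomial n a =>
    rw [Polynomial.aeval_monomial, Polynomial.coeff_monomial, mul_left_comm, algebraMap_apply,
      Algebra.algebraMap_self_apply, coeff_C_mul, coeff_inv_pow_succ_mul_derivative_X_mul_mul_pow,
      mul_ite, mul_one, mul_zero]

theorem coeff_inv_pow_succ_mul_derivative_X_mul_mul_subst (u : R⟦X⟧ˣ) (p : ℕ)
    (G : R⟦X⟧) :
    coeff p ((↑u⁻¹ : R⟦X⟧) ^ (p + 1) * d⁄dX R (X * (u : R⟦X⟧)) * G.subst (X * (u : R⟦X⟧))) =
      coeff p G := by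
  have hY : HasSubst (X * (u : R⟦X⟧)) := HasSubst.of_constantCoeff_zero' (by simp)
  have htail : (X ^ (p + 1) * mk fun i ↦ coeff (i + (p + 1)) G).subst (X * (u : R⟦X⟧)) =
      X ^ (p + 1) * ((u : R⟦X⟧) ^ (p + 1) * (mk fun i ↦ coeff (i + (p + 1)) G).subst
        (X * (u : R⟦X⟧))) := by
    rw [subst_mul hY, subst_pow hY, subst_X hY]; ring
  conv_lhs => rw [G.eq_X_pow_mul_shift_add_trunc (p + 1), subst_add hY, htail, subst_coe hY,
    mul_add, map_add, mul_left_comm, coeff_X_pow_mul', if_neg (by omega), zero_add,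
    coeff_inv_pow_succ_mul_derivative_X_mul_mul_aeval, coeff_trunc, if_pos (by omega)]

theorem lagrange_inversion (u : R⟦X⟧ˣ) (φ : R⟦X⟧)
    (hu : (u : R⟦X⟧) = φ.subst (X * (u : R⟦X⟧))) {j m : ℕ} (hj : 1 ≤ j) (hjm : j ≤ m) :
    (m : R) * coeff m ((X * (u : R⟦X⟧)) ^ j) = j * coeff (m - j) (φ ^ m) := by
  have hY : HasSubst (X * (u : R⟦X⟧)) := HasSubst.of_constantCoeff_zero' (by simp)
  set c : R⟦X⟧ := ↑u⁻¹
  obtain ⟨m, rfl⟩ : ∃ m', m = m' + 1 := ⟨m - 1, by omega⟩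
  have hpow : (u : R⟦X⟧) ^ (j - 1) = c ^ (m + 1 - j + 1) * φ.subst (X * (u : R⟦X⟧)) ^ (m + 1) := by
    rw [← hu, ← one_mul ((u : R⟦X⟧) ^ (j - 1)), ← one_pow (m + 1 - j + 1), ← u.inv_mul, mul_pow,
      mul_assoc, ← pow_add, show m + 1 - j + 1 + (j - 1) = m + 1 by omega]
  calc ((m + 1 : ℕ) : R) * coeff (m + 1) ((X * (u : R⟦X⟧)) ^ j)
      = coeff m (d⁄dX R ((X * (u : R⟦X⟧)) ^ j)) := by rw [coeff_derivative]; push_cast; ring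
    _ = j * coeff m (X ^ (j - 1) * ((u : R⟦X⟧) ^ (j - 1) * d⁄dX R (X * (u : R⟦X⟧)))) := by
      rw [derivative_pow, mul_pow, ← map_natCast (C (R := R)), mul_assoc, mul_assoc, coeff_C_mul]
    _ = j * coeff (m + 1 - j) (φ ^ (m + 1)) := by
      rw [coeff_X_pow_mul', if_pos (by omega), hpow, show m - (j - 1) = m + 1 - j by omega,
        ← subst_pow hY, mul_right_comm,
        coeff_inv_pow_succ_mul_derivative_X_mul_mul_subst]

theorem natCast_mul_coeff_pow_eq_sum (w : Rˣ) (y : R⟦X⟧)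
    (h0 : constantCoeff y = 0) (hy : y * (1 - C (w : R) * y) = X * C (w : R) * (1 + y) ^ 3)
    {j m : ℕ} (hj : 1 ≤ j) (hjm : j ≤ m) :
    (m : R) * coeff m (y ^ j) = j * ∑ i ∈ Finset.range (m - j + 1),
      ((3 * m).choose (m - j - i) * (m - 1 + i).choose (m - 1) * (w : R) ^ (m + i) : R) := by
  obtain ⟨u, rfl⟩ := X_dvd_iff.mpr h0
  have hu : u * (1 - C (w : R) * (X * u)) = C (w : R) * (1 + X * u) ^ 3 :=
    X_mul_inj.mp (by linear_combination hy)
  have hcc : constantCoeff u = w := by simpa using congrArg constantCoeff hu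
  obtain ⟨U, rfl⟩ : IsUnit u := isUnit_iff_constantCoeff.mpr (hcc ▸ w.isUnit)
  have hY : HasSubst (X * (U : R⟦X⟧)) := HasSubst.of_constantCoeff_zero' (by simp)
  have hgeom : rescale (w : R) (mk 1) * (1 - C (w : R) * X) = 1 := by
    simpa [rescale_X] using congrArg (rescale (w : R)) (mk_one_mul_one_sub_eq_one R)
  set φ : R⟦X⟧ := C (w : R) * (1 + X) ^ 3 * rescale (w : R) (mk 1) with hφdef
  have hφ : (U : R⟦X⟧) = φ.subst (X * (U : R⟦X⟧)) := by
    set σ := substAlgHom (R := R) hY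
    have hσC : σ (C (w : R)) = C (w : R) := by simpa [algebraMap_apply] using σ.commutes (w : R)
    have hσgeom : σ (rescale (w : R) (mk 1)) * (1 - C (w : R) * (X * (U : R⟦X⟧))) = 1 := by
      simpa [hσC, σ, substAlgHom_X] using congrArg σ hgeom
    rw [← coe_substAlgHom hY, hφdef, map_mul, map_mul, map_pow, map_add, map_one, hσC,
      substAlgHom_X]
    linear_combination (-(U : R⟦X⟧)) * hσgeom + σ (rescale (w : R) (mk 1)) * hu
  obtain ⟨m, rfl⟩ : ∃ m', m = m' + 1 := ⟨m - 1, by omega⟩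
  have hφpow : φ ^ (m + 1) = C ((w : R) ^ (m + 1)) *
      ((1 + X) ^ (3 * (m + 1)) * rescale (w : R) (mk fun n ↦ ((m + n).choose m : R))) := by
    rw [hφdef, mul_pow, mul_pow, ← map_pow, ← map_pow, mk_one_pow_eq_mk_choose_add, ← pow_mul]
    ring
  rw [lagrange_inversion U φ hφ hj hjm, hφpow, coeff_C_mul,
    coeff_one_add_X_pow_mul_rescale_mk_choose, Finset.mul_sum, Finset.mul_sum, Finset.mul_sum]
  refine Finset.sum_congr rfl fun i _ ↦ ?_
  rw [Nat.add_sub_cancel, pow_add]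
  ring

end PowerSeries

theorem ichoose_natCast (a b : ℕ) : ichoose a b = a.choose b := by
  unfold ichoose
  split_ifs with h
  · simp
  · rw [Nat.choose_eq_zero_of_lt (by omega), Nat.cast_zero]

theorem ichoose_of_lt {a b : ℤ} (h : a < b) : ichoose a b = 0 := if_neg (by omega)

theorem coeff_sum_choose_mul_choose_mul_X_pow {j m : ℕ} (hj : 1 ≤ j) (hjm : j ≤ m) (k : ℕ) :
    coeff k (∑ i ∈ Finset.range (m - j + 1),
      ((3 * m).choose (m - j - i) * (m - 1 + i).choose (m - 1) * (X : ℚ⟦X⟧) ^ (m + i) : ℚ⟦X⟧)) =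
      (ichoose (3 * m : ℕ) (m + k + j : ℕ) * ichoose ((k : ℤ) - 1) ((m : ℤ) - 1) : ℤ) := by
  simp only [map_sum, ← map_natCast (C (R := ℚ)), ← map_mul, coeff_C_mul_X_pow]
  by_cases hk : m ≤ k ∧ k ≤ m + (m - j)
  · rw [Finset.sum_eq_single_of_mem (k - m) (Finset.mem_range.mpr (by omega)), if_pos (by omega),
      ichoose_natCast, show ((k : ℤ) - 1) = (m - 1 + (k - m) : ℕ) by omega,
      show ((m : ℤ) - 1) = (m - 1 : ℕ) by omega, ichoose_natCast,
      ← Nat.choose_symm (show m + k + j ≤ 3 * m by omega),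
      show 3 * m - (m + k + j) = m - j - (k - m) by omega]
    · push_cast; ring
    · intro i _ hi
      rw [if_neg (by omega)]
  · rw [Finset.sum_eq_zero fun i hi ↦ if_neg (by have := Finset.mem_range.mp hi; omega)]
    rcases not_and_or.mp hk with hk | hk
    · rw [ichoose_of_lt (by omega : (k : ℤ) - 1 < (m : ℤ) - 1)]; simp
    · rw [ichoose_of_lt (by push_cast; omega)]; simp

theorem natCast_mul_coeff_pow_eq_sum_X_pow (y : PowerSeries (PowerSeries ℚ))
    (h0 : constantCoeff y = 0) (hy : y * (1 - Wvar * y) = X * Wvar * (1 + y) ^ 3)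
    {j m : ℕ} (hj : 1 ≤ j) (hjm : j ≤ m) :
    (m : ℚ⟦X⟧) * coeff m (y ^ j) = j * ∑ i ∈ Finset.range (m - j + 1),
      ((3 * m).choose (m - j - i) * (m - 1 + i).choose (m - 1) * (X : ℚ⟦X⟧) ^ (m + i) : ℚ⟦X⟧) := by
  set τ := HahnSeries.ofPowerSeries ℤ ℚ
  have : IsAddTorsionFree (LaurentSeries ℚ) := .of_module_rat _
  have hw : IsUnit (τ X) :=
    isUnit_iff_ne_zero.mpr ((map_ne_zero_iff τ HahnSeries.ofPowerSeries_injective).mpr X_ne_zero)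
  have key := natCast_mul_coeff_pow_eq_sum hw.unit (map τ y)
    (by simp [← coeff_zero_eq_constantCoeff_apply, h0])
    (by simpa [Wvar] using congrArg (map τ) hy) hj hjm
  apply HahnSeries.ofPowerSeries_injective (Γ := ℤ)
  simpa [τ, ← coeff_map] using key

theorem natCast_mul_coeff_coeff_pow (y : PowerSeries (PowerSeries ℚ))
    (h0 : constantCoeff y = 0) (hy : y * (1 - Wvar * y) = X * Wvar * (1 + y) ^ 3)
    {j : ℕ} (hj : 1 ≤ j) (m k : ℕ) :
    (m : ℚ) * coeff k (coeff m (y ^ j)) =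
      j * (ichoose (3 * m : ℕ) (m + k + j : ℕ) * ichoose ((k : ℤ) - 1) ((m : ℤ) - 1) : ℤ) := by
  rcases le_or_gt j m with hjm | hmj
  · have h := congrArg (coeff k) (natCast_mul_coeff_pow_eq_sum_X_pow y h0 hy hj hjm)
    rwa [← map_natCast (C (R := ℚ)) m, ← map_natCast (C (R := ℚ)) j, coeff_C_mul, coeff_C_mul,
      coeff_sum_choose_mul_choose_mul_X_pow hj hjm k] at h
  · obtain ⟨u, rfl⟩ := X_dvd_iff.mpr h0
    rw [mul_pow, coeff_X_pow_mul', if_neg (by omega), map_zero, mul_zero]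
    rcases le_or_gt m k with hk | hk
    · rw [ichoose_of_lt (by push_cast; omega)]; simp
    · rw [ichoose_of_lt (a := (k : ℤ) - 1) (by omega)]; simp

/-- Let `y ∈ ℚ[[z,w]]` be the series with zero constant term satisfying
`y = z·w(1+y)³/(1-wy)` (stated multiplied out). Then for `n ≥ 3`, the coefficient
of `z^(n-2)·wᵏ` in `y` is `(1/(n-2))·C(3n-6, n+k-1)·C(k-1, n-3)` and in `y²` is
`(2/(n-2))·C(3n-6, n+k)·C(k-1, n-3)`. -/
theorem stmt19 (y : PowerSeries (PowerSeries ℚ))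
    (h0 : constantCoeff (R := PowerSeries ℚ) y = 0)
    (hy : y * (1 - Wvar * y) = X * Wvar * (1 + y) ^ 3)
    (n k : ℕ) (hn : 3 ≤ n) :
    coeff (R := ℚ) k (coeff (R := PowerSeries ℚ) (n - 2) y) =
      (ichoose (3 * (n : ℤ) - 6) ((n : ℤ) + (k : ℤ) - 1) *
        ichoose ((k : ℤ) - 1) ((n : ℤ) - 3) : ℤ) / ((n : ℚ) - 2) ∧
    coeff (R := ℚ) k (coeff (R := PowerSeries ℚ) (n - 2) (y ^ 2)) =
      2 * (ichoose (3 * (n : ℤ) - 6) ((n : ℤ) + (k : ℤ)) *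
        ichoose ((k : ℤ) - 1) ((n : ℤ) - 3) : ℤ) / ((n : ℚ) - 2) := by
  obtain ⟨m, rfl⟩ : ∃ m, n = m + 2 := ⟨n - 2, by omega⟩
  have hm : ((m + 2 : ℕ) : ℚ) - 2 = m := by push_cast; ring
  have hm0 : (m : ℚ) ≠ 0 := by exact_mod_cast (by omega : m ≠ 0)
  have h3m : 3 * ((m + 2 : ℕ) : ℤ) - 6 = (3 * m : ℕ) := by push_cast; ring
  have hm1 : ((m + 2 : ℕ) : ℤ) - 3 = (m : ℤ) - 1 := by push_cast; ring
  have hk1 : ((m + 2 : ℕ) : ℤ) + k - 1 = (m + k + 1 : ℕ) := by push_cast; ring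
  have hk2 : ((m + 2 : ℕ) : ℤ) + k = (m + k + 2 : ℕ) := by push_cast; ring
  have hy1 := natCast_mul_coeff_coeff_pow y h0 hy le_rfl m k
  have hy2 := natCast_mul_coeff_coeff_pow y h0 hy one_le_two m k
  rw [pow_one] at hy1
  rw [Nat.add_sub_cancel, hm, h3m, hm1, hk1, hk2, eq_div_iff hm0, eq_div_iff hm0]
  push_cast at hy1 hy2 ⊢
  exact ⟨by linear_combination hy1, by linear_combination hy2⟩
end
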